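/- arXiv:2310.17495 — 4 statements merged into one kernel-verified Lean document; each statement's English description precedes it below -/
import Mathlib

section
/- Let M be a compact metric space, f: M → M continuous, and φ: M → ℝ. Suppose there is a Borel probability measure μ on M, a constant P ∈ ℝ, and r₀ > 0 such that for every r ∈ (0, r₀] there is K(r) > 0 with K(r)⁻¹ ≤ μ(Bₙ(x,r)) / exp(Sₙφ(x) − nP) ≤ K(r) for all x ∈ M and n ∈ ℕ (the Gibbs property). Then for every r ∈ (0, r₀), φ has the Bowen property at scale r: there exists L ∈ ℝ such that for all x ∈ M, n ∈ ℕ, and y ∈ Bₙ(x,r), one has |Sₙφ(x) − Sₙφ(y)| ≤ L. -/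
open MeasureTheory Finset

/-- Bowen ball of order `n` and radius `r`. -/
def bowenBall {M : Type*} [MetricSpace M] (f : M → M) (x : M) (n : ℕ) (r : ℝ) : Set M :=
  {y | ∀ k < n, dist (f^[k] x) (f^[k] y) < r}

/-- Birkhoff sum `Sₙφ(x)`. -/
def birkhoff {M : Type*} (f : M → M) (φ : M → ℝ) (n : ℕ) (x : M) : ℝ :=
  ∑ k ∈ Finset.range n, φ (f^[k] x)

private lemma bowen_subset {M : Type*} [MetricSpace M] (f : M → M) {x y : M} {n : ℕ}
    {r r' : ℝ} (hy : y ∈ bowenBall f x n r) :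
    bowenBall f y n r' ⊆ bowenBall f x n (r + r') := by
  intro z hz k hk
  calc dist (f^[k] x) (f^[k] z) ≤ dist (f^[k] x) (f^[k] y) + dist (f^[k] y) (f^[k] z) :=
        dist_triangle _ _ _
    _ < r + r' := add_lt_add (hy k hk) (hz k hk)

/-- A Gibbs measure forces the Bowen property at every scale `r < r₀`. -/
theorem gibbs_implies_bowen_property
    {M : Type*} [MetricSpace M] [CompactSpace M] [MeasurableSpace M] [BorelSpace M]
    (f : M → M) (hf : Continuous f) (φ : M → ℝ)
    (μ : Measure M) [IsProbabilityMeasure μ] (P : ℝ) (r₀ : ℝ) (hr₀ : 0 < r₀)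
    (hGibbs : ∀ r : ℝ, 0 < r → r ≤ r₀ → ∃ K : ℝ, 0 < K ∧ ∀ (x : M) (n : ℕ),
      ENNReal.ofReal (K⁻¹ * Real.exp (birkhoff f φ n x - n * P)) ≤ μ (bowenBall f x n r) ∧
      μ (bowenBall f x n r) ≤ ENNReal.ofReal (K * Real.exp (birkhoff f φ n x - n * P))) :
    ∀ r : ℝ, 0 < r → r < r₀ → ∃ L : ℝ, ∀ (x : M) (n : ℕ), ∀ y ∈ bowenBall f x n r,
      |birkhoff f φ n x - birkhoff f φ n y| ≤ L := by
  intro r hr hrr₀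
  set r' : ℝ := r₀ - r with hr'def
  have hr' : 0 < r' := by simp [hr'def]; linarith
  obtain ⟨K₁, hK₁, hG₁⟩ := hGibbs r' hr' (by linarith)
  obtain ⟨K₂, hK₂, hG₂⟩ := hGibbs r₀ hr₀ le_rfl
  refine ⟨Real.log (K₁ * K₂), ?_⟩
  -- key one-sided estimate
  have key : ∀ (x : M) (n : ℕ), ∀ y ∈ bowenBall f x n r,
      birkhoff f φ n y - birkhoff f φ n x ≤ Real.log (K₁ * K₂) := by
    intro x n y hy
    have hsub : bowenBall f y n r' ⊆ bowenBall f x n r₀ := by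
      have := bowen_subset f hy (r' := r')
      rwa [show r + r' = r₀ by ring] at this
    have h1 : ENNReal.ofReal (K₁⁻¹ * Real.exp (birkhoff f φ n y - n * P))
        ≤ ENNReal.ofReal (K₂ * Real.exp (birkhoff f φ n x - n * P)) :=
      le_trans (hG₁ y n).1 (le_trans (measure_mono hsub) (hG₂ x n).2)
    have h2 : K₁⁻¹ * Real.exp (birkhoff f φ n y - n * P)
        ≤ K₂ * Real.exp (birkhoff f φ n x - n * P) := by
      have := (ENNReal.ofReal_le_ofReal_iff (by positivity)).mp h1
      exact this
    have h3 : Real.exp (birkhoff f φ n y - n * P)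
        ≤ K₁ * K₂ * Real.exp (birkhoff f φ n x - n * P) := by
      rw [inv_mul_le_iff₀ hK₁] at h2
      linarith [h2]
    have h4 : Real.exp (birkhoff f φ n y - birkhoff f φ n x)
        ≤ K₁ * K₂ := by
      have hepos : (0:ℝ) < Real.exp (birkhoff f φ n x - n * P) := Real.exp_pos _
      rw [show birkhoff f φ n y - birkhoff f φ n x
            = (birkhoff f φ n y - n * P) - (birkhoff f φ n x - n * P) by ring,
          Real.exp_sub, div_le_iff₀ hepos]
      linarith
    have := Real.log_le_log (Real.exp_pos _) h4
    rwa [Real.log_exp] at this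
  intro x n y hy
  have hyx : x ∈ bowenBall f y n r := fun k hk => by
    rw [dist_comm]; exact hy k hk
  rw [abs_sub_le_iff]
  exact ⟨key y n x hyx, key x n y hy⟩
end

section
/- Let M be a metric space, f: M → M a map, φ: M → ℝ bounded, and suppose μ is an f-invariant Borel probability measure with the Gibbs property: for some P ∈ ℝ and all sufficiently small r there is K(r) with μ(B_N(x,r)) = K(r)^{±1} exp(S_Nφ(x) − NP). Then for a homeomorphism f, the measure of the two-sided Bowen ball satisfies μ(B_{n,m}(q,r)) ≤ K(r) · e^{P + ‖φ‖_∞} · exp(S_m φ(q) − mP) · exp(S_n^− φ(q) − nP), where S_n^− φ(q) = Σ_{k=0}^{n−1} φ(f^{−k} q). -/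
open MeasureTheory Finset

private lemma contZpowAux {M : Type*} [MetricSpace M] (f : M ≃ₜ M) (k : ℤ) :
    Continuous ⇑(f.toEquiv ^ k) := by
  rcases k with n | n
  · rw [Int.ofNat_eq_coe, zpow_natCast, Equiv.Perm.coe_pow]
    exact f.continuous.iterate n
  · rw [zpow_negSucc, ← inv_pow]
    have h : (f.toEquiv)⁻¹ = f.symm.toEquiv := rfl
    rw [h, Equiv.Perm.coe_pow]
    exact f.symm.continuous.iterate _

private lemma zpowApplyAux {M : Type*} (g : Equiv.Perm M) (a b : ℤ) (x : M) :
    (g ^ a) ((g ^ b) x) = (g ^ (a + b)) x := by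
  rw [← Equiv.Perm.mul_apply, ← zpow_add]

private lemma iterApplyAux {M : Type*} [MetricSpace M] (f : M ≃ₜ M) (j : ℕ) (z : M) :
    (⇑f)^[j] z = (f.toEquiv ^ (j : ℤ)) z := by
  rw [zpow_natCast, Equiv.Perm.coe_pow]
  rfl

def twoSidedBowenBall {M : Type*} [MetricSpace M] (g : Equiv.Perm M) (q : M) (n m : ℕ)
    (r : ℝ) : Set M :=
  {z | ∀ k : ℤ, -(n : ℤ) < k → k < (m : ℤ) → dist ((g ^ k) z) ((g ^ k) q) < r}

def oneSidedBowenBall {M : Type*} [MetricSpace M] (g : Equiv.Perm M) (x : M) (N : ℕ)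
    (r : ℝ) : Set M :=
  {z | ∀ k < N, dist ((g ^ (k : ℤ)) x) ((g ^ (k : ℤ)) z) < r}

/-- Forward Birkhoff sum `Sₘφ(q)` for an invertible map. -/
def birkhoffFwd {M : Type*} (g : Equiv.Perm M) (φ : M → ℝ) (m : ℕ) (q : M) : ℝ :=
  ∑ k ∈ Finset.range m, φ ((g ^ (k : ℤ)) q)

/-- Backward Birkhoff sum `Sₙ⁻φ(q)`. -/
def birkhoffBwd {M : Type*} (g : Equiv.Perm M) (φ : M → ℝ) (n : ℕ) (q : M) : ℝ :=
  ∑ k ∈ Finset.range n, φ ((g ^ (-(k : ℤ))) q)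

/-- Gibbs upper bound on the measure of a two-sided Bowen ball. -/
theorem measure_twoSidedBowenBall_le
    {M : Type*} [MetricSpace M] [MeasurableSpace M] [BorelSpace M]
    (f : M ≃ₜ M) (φ : M → ℝ) (B : ℝ) (hB : ∀ x, |φ x| ≤ B)
    (μ : Measure M) [IsProbabilityMeasure μ]
    (hinv : MeasurePreserving f μ μ)
    (P r K : ℝ) (hr : 0 < r) (hK : 0 < K)
    (hGibbs : ∀ (x : M) (N : ℕ),
      ENNReal.ofReal (K⁻¹ * Real.exp (birkhoffFwd f.toEquiv φ N x - N * P)) ≤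
        μ (oneSidedBowenBall f.toEquiv x N r) ∧
      μ (oneSidedBowenBall f.toEquiv x N r) ≤
        ENNReal.ofReal (K * Real.exp (birkhoffFwd f.toEquiv φ N x - N * P)))
    (q : M) (n m : ℕ) (hn : 1 ≤ n) (hm : 1 ≤ m) :
    μ (twoSidedBowenBall f.toEquiv q n m r) ≤
      ENNReal.ofReal (K * Real.exp (P + B) *
        Real.exp (birkhoffFwd f.toEquiv φ m q - m * P) *
        Real.exp (birkhoffBwd f.toEquiv φ n q - n * P)) := by

  set g := f.toEquiv with hg
  obtain ⟨j, hj⟩ : ∃ j, n = j + 1 := ⟨n - 1, by omega⟩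
  set p := (g ^ (-(j : ℤ))) q with hp
  set N := m + j with hN
  -- measurability of the two-sided Bowen ball
  have hS : MeasurableSet (twoSidedBowenBall g q n m r) := by
    have hrepr : twoSidedBowenBall g q n m r =
        ⋂ k : ℤ, {z | -(n : ℤ) < k → k < (m : ℤ) → dist ((g ^ k) z) ((g ^ k) q) < r} := by
      ext z; simp [twoSidedBowenBall, Set.mem_iInter]
    rw [hrepr]
    refine MeasurableSet.iInter fun k => ?_
    by_cases h1 : -(n : ℤ) < k
    · by_cases h2 : k < (m : ℤ)
      · have : {z : M | -(n : ℤ) < k → k < (m : ℤ) → dist ((g ^ k) z) ((g ^ k) q) < r} =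
            {z : M | dist ((g ^ k) z) ((g ^ k) q) < r} := by
          ext z; simp [h1, h2]
        rw [this]
        exact measurableSet_lt ((contZpowAux f k).dist continuous_const).measurable
          measurable_const
      · have : {z : M | -(n : ℤ) < k → k < (m : ℤ) → dist ((g ^ k) z) ((g ^ k) q) < r} =
            Set.univ := by ext z; simp [h2]
        rw [this]; exact MeasurableSet.univ
    · have : {z : M | -(n : ℤ) < k → k < (m : ℤ) → dist ((g ^ k) z) ((g ^ k) q) < r} =
          Set.univ := by ext z; simp [h1]
      rw [this]; exact MeasurableSet.univ
  -- the preimage identity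
  have hpre : (⇑f)^[j] ⁻¹' twoSidedBowenBall g q n m r = oneSidedBowenBall g p N r := by
    ext z
    simp only [Set.mem_preimage, twoSidedBowenBall, oneSidedBowenBall, Set.mem_setOf_eq,
      iterApplyAux f j z]
    constructor
    · intro h i hi
      have hi' : (i : ℤ) < (m : ℤ) + j := by exact_mod_cast hi
      have hk1 : -(n : ℤ) < (i : ℤ) - j := by omega
      have hk2 : (i : ℤ) - j < (m : ℤ) := by omega
      have key := h ((i : ℤ) - j) hk1 hk2
      have e1 : (g ^ (i : ℤ)) p = (g ^ ((i : ℤ) - j)) q := by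
        rw [hp, zpowApplyAux]; ring_nf
      have e2 : (g ^ ((i : ℤ) - j)) ((g ^ (j : ℤ)) z) = (g ^ (i : ℤ)) z := by
        rw [zpowApplyAux]; ring_nf
      rw [e1, dist_comm, ← e2]; exact key
    · intro h k hk1 hk2
      set i := (k + j).toNat with hi
      have hi' : (i : ℤ) = k + j := Int.toNat_of_nonneg (by omega)
      have hiN : i < N := by omega
      have key := h i hiN
      have e1 : (g ^ (i : ℤ)) p = (g ^ k) q := by
        rw [hp, zpowApplyAux, hi']; ring_nf
      have e2 : (g ^ (i : ℤ)) z = (g ^ k) ((g ^ (j : ℤ)) z) := by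
        rw [zpowApplyAux, hi']
      rw [e1, e2, dist_comm] at key; exact key
  -- measure equality
  have hmeq : μ (twoSidedBowenBall g q n m r) = μ (oneSidedBowenBall g p N r) := by
    rw [← hpre]
    exact ((hinv.iterate j).measure_preimage hS.nullMeasurableSet).symm
  -- Birkhoff sum identity
  have hsum : birkhoffFwd g φ N p = birkhoffFwd g φ m q + birkhoffBwd g φ n q - φ q := by
    have hterm : ∀ i : ℕ, φ ((g ^ (i : ℤ)) p) = φ ((g ^ ((i : ℤ) - j)) q) := by
      intro i; rw [hp, zpowApplyAux]; ring_nf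
    have hL : birkhoffFwd g φ N p = ∑ i ∈ Finset.range (j + m), φ ((g ^ ((i : ℤ) - j)) q) := by
      rw [birkhoffFwd, hN, add_comm m j]
      exact Finset.sum_congr rfl fun i _ => hterm i
    rw [hL, Finset.sum_range_add]
    have h2 : ∑ i ∈ Finset.range m, φ ((g ^ (((j + i : ℕ) : ℤ) - j)) q) =
        birkhoffFwd g φ m q := by
      rw [birkhoffFwd]
      refine Finset.sum_congr rfl fun i _ => ?_
      congr 2; push_cast; ring
    have h1 : ∑ i ∈ Finset.range j, φ ((g ^ ((i : ℤ) - j)) q) =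
        birkhoffBwd g φ n q - φ q := by
      rw [← Finset.sum_range_reflect, birkhoffBwd, hj, Finset.sum_range_succ']
      have : ∀ i ∈ Finset.range j, φ ((g ^ (((j - 1 - i : ℕ) : ℤ) - j)) q) =
          φ ((g ^ (-((i : ℕ) + 1 : ℤ))) q) := by
        intro i hi
        rw [Finset.mem_range] at hi
        have hexp : (((j - 1 - i : ℕ) : ℤ)) - (j : ℤ) = -((i : ℤ) + 1) := by omega
        rw [hexp]
      rw [Finset.sum_congr rfl this]
      have hcast : ∀ x : ℕ, (-((x : ℤ) + 1)) = -(((x + 1 : ℕ)) : ℤ) := by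
        intro x; push_cast; ring
      simp only [hcast, Nat.cast_zero, neg_zero, zpow_zero, Equiv.Perm.one_apply]
      ring
    rw [h1, h2]; ring
  -- final estimate
  calc μ (twoSidedBowenBall g q n m r) = μ (oneSidedBowenBall g p N r) := hmeq
    _ ≤ ENNReal.ofReal (K * Real.exp (birkhoffFwd g φ N p - N * P)) := (hGibbs p N).2
    _ ≤ _ := by
        apply ENNReal.ofReal_le_ofReal
        rw [hsum]
        have hNc : (N : ℝ) = m + j := by rw [hN]; push_cast; ring
        have hnc : (n : ℝ) = j + 1 := by rw [hj]; push_cast; ring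
        have hE : K * Real.exp (birkhoffFwd g φ m q + birkhoffBwd g φ n q - φ q - N * P) =
            K * (Real.exp (birkhoffFwd g φ m q - m * P) *
              Real.exp (birkhoffBwd g φ n q - n * P) * Real.exp (P - φ q)) := by
          rw [← Real.exp_add, ← Real.exp_add]
          congr 1
          rw [hNc, hnc]; ring_nf
        rw [hE]
        have hφ : P - φ q ≤ P + B := by
          have := (abs_le.mp (hB q)).1; linarith
        have hexp : Real.exp (P - φ q) ≤ Real.exp (P + B) := Real.exp_le_exp.mpr hφ
        have hR : K * Real.exp (P + B) * Real.exp (birkhoffFwd g φ m q - m * P) *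
            Real.exp (birkhoffBwd g φ n q - n * P) =
            K * (Real.exp (birkhoffFwd g φ m q - m * P) *
              Real.exp (birkhoffBwd g φ n q - n * P) * Real.exp (P + B)) := by ring
        rw [hR]
        gcongr
end

section
/- Let X, Y be measurable spaces, ν^u = m^u + ρ^u and ν^s = m^s + ρ^s finite measures on X and Y respectively, and μ a finite measure on X × Y with μ ≪ ν^u ⊗ ν^s with density ψ. Suppose the marginal μ^u (pushforward of μ to X) satisfies m^u ≪ μ^u and there is a set E ⊆ X with μ^u(E) = 0 and ρ^u(Eᶜ) = 0 (i.e. ρ^u ⊥ μ^u), and symmetrically for the Y-factor. Then ψ vanishes (ρ^u ⊗ ν^s)-a.e. and (ν^u ⊗ ρ^s)-a.e., and consequently μ ≪ m^u ⊗ m^s ≪ μ^u ⊗ μ^s. -/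
open MeasureTheory

/-- Abstract product-space version of Lemma 2.5: from `μ ≪ ν^u ⊗ ν^s` one deduces
`μ ≪ μ^u ⊗ μ^s`, via the Lebesgue decompositions of `ν^u` and `ν^s`. -/
theorem lps_from_any_product
    {X Y : Type*} [MeasurableSpace X] [MeasurableSpace Y]
    (νu mu ρu : Measure X) (νs ms ρs : Measure Y)
    [IsFiniteMeasure νu] [IsFiniteMeasure νs]
    (μ : Measure (X × Y)) [IsFiniteMeasure μ]
    [SigmaFinite mu] [SigmaFinite ms] [SigmaFinite ρu] [SigmaFinite ρs]
    (ψ : X × Y → ENNReal) (hψ : Measurable ψ)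
    (hdens : μ = (νu.prod νs).withDensity ψ)
    (hu : νu = mu + ρu) (hs : νs = ms + ρs)
    (hmu : mu ≪ μ.map Prod.fst) (hms : ms ≪ μ.map Prod.snd)
    (hρu : ∃ E : Set X, MeasurableSet E ∧ μ.map Prod.fst E = 0 ∧ ρu Eᶜ = 0)
    (hρs : ∃ F : Set Y, MeasurableSet F ∧ μ.map Prod.snd F = 0 ∧ ρs Fᶜ = 0) :
    (ψ =ᵐ[ρu.prod νs] 0) ∧ (ψ =ᵐ[νu.prod ρs] 0) ∧
      μ ≪ mu.prod ms ∧ mu.prod ms ≪ (μ.map Prod.fst).prod (μ.map Prod.snd) := by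
  obtain ⟨E, hEm, hE0, hEc⟩ := hρu
  obtain ⟨F, hFm, hF0, hFc⟩ := hρs
  have hψne : MeasurableSet {p : X × Y | ψ p ≠ 0} :=
    (hψ (measurableSet_singleton 0)).compl
  -- ψ vanishes νu⊗νs-a.e. on E × univ
  have keyE : (νu.prod νs) ({p : X × Y | ψ p ≠ 0} ∩ E ×ˢ Set.univ) = 0 := by
    have h1 : μ (E ×ˢ Set.univ) = 0 := by
      rw [Set.prod_univ, ← Measure.map_apply measurable_fst hEm]
      exact hE0
    rw [hdens, withDensity_apply _ (hEm.prod MeasurableSet.univ)] at h1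
    have h2 : ψ =ᵐ[(νu.prod νs).restrict (E ×ˢ Set.univ)] 0 :=
      (lintegral_eq_zero_iff hψ).mp h1
    have h3 := h2
    rw [Filter.EventuallyEq, ae_iff] at h3
    simpa [Measure.restrict_apply hψne] using h3
  have keyF : (νu.prod νs) ({p : X × Y | ψ p ≠ 0} ∩ Set.univ ×ˢ F) = 0 := by
    have h1 : μ (Set.univ ×ˢ F) = 0 := by
      rw [Set.univ_prod, ← Measure.map_apply measurable_snd hFm]
      exact hF0
    rw [hdens, withDensity_apply _ (MeasurableSet.univ.prod hFm)] at h1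
    have h2 : ψ =ᵐ[(νu.prod νs).restrict (Set.univ ×ˢ F)] 0 :=
      (lintegral_eq_zero_iff hψ).mp h1
    have h3 := h2
    rw [Filter.EventuallyEq, ae_iff] at h3
    simpa [Measure.restrict_apply hψne] using h3
  -- monotonicity: ρu.prod νs ≤ νu.prod νs etc.
  have hle_u : ρu.prod νs ≤ νu.prod νs := by
    rw [hu, Measure.add_prod]; exact Measure.le_add_left le_rfl
  have hle_s : νu.prod ρs ≤ νu.prod νs := by
    rw [hs, Measure.prod_add]; exact Measure.le_add_left le_rfl
  have h1 : ψ =ᵐ[ρu.prod νs] 0 := by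
    rw [Filter.EventuallyEq, ae_iff]
    have hsub : {p : X × Y | ψ p ≠ 0} ⊆
        ({p : X × Y | ψ p ≠ 0} ∩ E ×ˢ Set.univ) ∪ Eᶜ ×ˢ Set.univ := by
      intro p hp
      by_cases hpE : p.1 ∈ E
      · exact Or.inl ⟨hp, hpE, Set.mem_univ _⟩
      · exact Or.inr ⟨hpE, Set.mem_univ _⟩
    refine le_antisymm ?_ zero_le
    calc (ρu.prod νs) {p | ¬ ψ p = 0}
        ≤ (ρu.prod νs) (({p : X × Y | ψ p ≠ 0} ∩ E ×ˢ Set.univ) ∪ Eᶜ ×ˢ Set.univ) :=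
          measure_mono hsub
      _ ≤ (ρu.prod νs) ({p : X × Y | ψ p ≠ 0} ∩ E ×ˢ Set.univ)
            + (ρu.prod νs) (Eᶜ ×ˢ Set.univ) := measure_union_le _ _
      _ ≤ (νu.prod νs) ({p : X × Y | ψ p ≠ 0} ∩ E ×ˢ Set.univ)
            + (ρu.prod νs) (Eᶜ ×ˢ Set.univ) := by
          gcongr
      _ = 0 := by rw [keyE, Measure.prod_prod, hEc, zero_mul, add_zero]
  have h2 : ψ =ᵐ[νu.prod ρs] 0 := by
    rw [Filter.EventuallyEq, ae_iff]
    have hsub : {p : X × Y | ψ p ≠ 0} ⊆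
        ({p : X × Y | ψ p ≠ 0} ∩ Set.univ ×ˢ F) ∪ Set.univ ×ˢ Fᶜ := by
      intro p hp
      by_cases hpF : p.2 ∈ F
      · exact Or.inl ⟨hp, Set.mem_univ _, hpF⟩
      · exact Or.inr ⟨Set.mem_univ _, hpF⟩
    refine le_antisymm ?_ zero_le
    calc (νu.prod ρs) {p | ¬ ψ p = 0}
        ≤ (νu.prod ρs) (({p : X × Y | ψ p ≠ 0} ∩ Set.univ ×ˢ F) ∪ Set.univ ×ˢ Fᶜ) :=
          measure_mono hsub
      _ ≤ (νu.prod ρs) ({p : X × Y | ψ p ≠ 0} ∩ Set.univ ×ˢ F)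
            + (νu.prod ρs) (Set.univ ×ˢ Fᶜ) := measure_union_le _ _
      _ ≤ (νu.prod νs) ({p : X × Y | ψ p ≠ 0} ∩ Set.univ ×ˢ F)
            + (νu.prod ρs) (Set.univ ×ˢ Fᶜ) := by
          gcongr
      _ = 0 := by rw [keyF, Measure.prod_prod, hFc, mul_zero, add_zero]
  refine ⟨h1, h2, ?_, ?_⟩
  · -- μ ≪ mu.prod ms
    have hdecomp : νu.prod νs
        = mu.prod ms + (mu.prod ρs + (ρu.prod ms + ρu.prod ρs)) := by
      rw [hu, hs, Measure.add_prod, Measure.prod_add, Measure.prod_add, add_assoc]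
    have hz : ∀ (π : Measure (X × Y)), ψ =ᵐ[π] 0 → π.withDensity ψ = 0 := by
      intro π hπ
      rw [withDensity_congr_ae hπ, withDensity_zero]
    have hz1 : (mu.prod ρs).withDensity ψ = 0 := by
      refine hz _ (h2.filter_mono (ae_mono ?_))
      rw [hu, Measure.add_prod]; exact Measure.le_add_right le_rfl
    have hz2 : (ρu.prod ms).withDensity ψ = 0 := by
      refine hz _ (h1.filter_mono (ae_mono ?_))
      rw [hs, Measure.prod_add]; exact Measure.le_add_right le_rfl
    have hz3 : (ρu.prod ρs).withDensity ψ = 0 := by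
      refine hz _ (h1.filter_mono (ae_mono ?_))
      rw [hs, Measure.prod_add]; exact Measure.le_add_left le_rfl
    have : μ = (mu.prod ms).withDensity ψ := by
      rw [hdens, hdecomp, withDensity_add_measure, withDensity_add_measure,
        withDensity_add_measure, hz1, hz2, hz3]
      simp
    rw [this]
    exact withDensity_absolutelyContinuous _ _
  · -- mu.prod ms ≪ μ^u ⊗ μ^s
    haveI : IsFiniteMeasure (μ.map Prod.snd) := Measure.isFiniteMeasure_map μ Prod.snd
    exact Measure.AbsolutelyContinuous.prod hmu hms
end

section
/- In the axiomatic Anosov bracket setting (contraction constant C, shadowing constant δ, bracket Lipschitz constant Q, bracket defined when d(x,y) ≤ ε), fix ε₁ ∈ (0, ε] with max(C, Lip(f))·Q·ε₁ < δ. If x, y ∈ M and n ∈ ℕ satisfy d(fᵏx, fᵏy) ≤ ε₁ for all 0 ≤ k ≤ n, then fⁿ([x,y]) = [fⁿx, fⁿy]. -/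
/-- Lemma 2.2: the bracket commutes with `f` along orbit segments staying `ε₁`-close,
where `max(C, Lip f) · Q · ε₁ < δ`. Axiomatic bracket setting. -/
theorem bracket_commutes_with_f
    {M : Type*} [MetricSpace M] (f : M ≃ M)
    (Ws Wu : M → Set M) (br : M → M → M)
    (C lam δ ε Q L ε₁ : ℝ) (hC : 1 ≤ C) (hlam0 : 0 < lam) (hlam1 : lam < 1)
    (hδ : 0 < δ) (hε : 0 < ε) (hQ : 0 < Q)
    (hLip : ∀ a b : M, dist (f a) (f b) ≤ L * dist a b)
    (hε₁0 : 0 < ε₁) (hε₁ε : ε₁ ≤ ε) (hε₁ : max C L * Q * ε₁ < δ)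
    (hcontr_s : ∀ x y, y ∈ Ws x → ∀ n : ℕ,
      dist ((f ^ (n : ℤ)) x) ((f ^ (n : ℤ)) y) ≤ C * lam ^ n * dist x y)
    (hcontr_u : ∀ x y, y ∈ Wu x → ∀ n : ℕ,
      dist ((f ^ (-(n : ℤ))) x) ((f ^ (-(n : ℤ))) y) ≤ C * lam ^ n * dist x y)
    (hshadow_s : ∀ x y, (∀ n : ℕ, dist ((f ^ (n : ℤ)) x) ((f ^ (n : ℤ)) y) ≤ δ) → y ∈ Ws x)
    (hshadow_u : ∀ x y, (∀ n : ℕ, dist ((f ^ (-(n : ℤ))) x) ((f ^ (-(n : ℤ))) y) ≤ δ) → y ∈ Wu x)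
    (hbr_mem : ∀ x y, dist x y ≤ ε → br x y ∈ Ws x ∩ Wu y)
    (hbr_lip : ∀ x y, dist x y ≤ ε →
      dist (br x y) x ≤ Q * dist x y ∧ dist (br x y) y ≤ Q * dist x y)
    -- Lemma 2.1: uniqueness of the shadowing point
    (hbr_char : ∀ x y, dist x y ≤ ε → dist x y < δ / (C * Q) → ∀ z : M,
      (z = br x y ↔
        (∀ k : ℕ, dist ((f ^ (k : ℤ)) z) ((f ^ (k : ℤ)) x) < δ ∧
          dist ((f ^ (-(k : ℤ))) z) ((f ^ (-(k : ℤ))) y) < δ)))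
    (x y : M) (n : ℕ)
    (hclose : ∀ k : ℕ, k ≤ n → dist ((f ^ (k : ℤ)) x) ((f ^ (k : ℤ)) y) ≤ ε₁) :
    (f ^ (n : ℤ)) (br x y) = br ((f ^ (n : ℤ)) x) ((f ^ (n : ℤ)) y) := by
  -- Basic positivity facts
  have hCQ : 0 < C * Q := mul_pos (lt_of_lt_of_le one_pos hC) hQ
  have hmax0 : (0:ℝ) ≤ max C L := le_trans (le_trans zero_le_one hC) (le_max_left C L)
  have hCQε : C * Q * ε₁ < δ := by
    calc C * Q * ε₁ ≤ max C L * Q * ε₁ := by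
          apply mul_le_mul_of_nonneg_right _ (le_of_lt hε₁0)
          exact mul_le_mul_of_nonneg_right (le_max_left C L) (le_of_lt hQ)
      _ < δ := hε₁
  -- one-step commutation
  have step : ∀ a b : M, dist a b ≤ ε₁ → dist (f a) (f b) ≤ ε₁ →
      f (br a b) = br (f a) (f b) := by
    intro a b hab hfab
    have hab_ε : dist a b ≤ ε := hab.trans hε₁ε
    have hfab_ε : dist (f a) (f b) ≤ ε := hfab.trans hε₁ε
    have hfab_lt : dist (f a) (f b) < δ / (C * Q) := by
      rw [lt_div_iff₀ hCQ]
      calc dist (f a) (f b) * (C * Q) ≤ ε₁ * (C * Q) :=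
            mul_le_mul_of_nonneg_right hfab (le_of_lt hCQ)
        _ = C * Q * ε₁ := by ring
        _ < δ := hCQε
    have hmem := hbr_mem a b hab_ε
    have hlip := hbr_lip a b hab_ε
    have hQab : Q * dist a b ≤ Q * ε₁ := mul_le_mul_of_nonneg_left hab (le_of_lt hQ)
    refine ((hbr_char (f a) (f b) hfab_ε hfab_lt (f (br a b))).mpr ?_).symm.symm
    intro k
    constructor
    · -- forward shadowing
      have hrw : ∀ w : M, (f ^ (k : ℤ)) (f w) = (f ^ ((k + 1 : ℕ) : ℤ)) w := by
        intro w
        rw [zpow_natCast, zpow_natCast, pow_succ, Equiv.Perm.mul_apply]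
      rw [hrw, hrw]
      have h1 := hcontr_s a (br a b) hmem.1 (k + 1)
      rw [dist_comm ((f ^ ((k+1:ℕ):ℤ)) a)] at h1
      calc dist ((f ^ ((k+1:ℕ):ℤ)) (br a b)) ((f ^ ((k+1:ℕ):ℤ)) a)
          ≤ C * lam ^ (k+1) * dist a (br a b) := h1
        _ ≤ C * 1 * (Q * ε₁) := by
            apply mul_le_mul
            · apply mul_le_mul_of_nonneg_left _ (le_trans zero_le_one hC)
              exact pow_le_one₀ hlam0.le hlam1.le
            · rw [dist_comm]; exact hlip.1.trans hQab
            · exact dist_nonneg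
            · positivity
        _ = C * Q * ε₁ := by ring
        _ < δ := hCQε
    · -- backward shadowing
      cases k with
      | zero =>
        simp only [Nat.cast_zero, neg_zero, zpow_zero, Equiv.Perm.coe_one, id_eq]
        calc dist (f (br a b)) (f b) ≤ L * dist (br a b) b := hLip _ _
          _ ≤ max C L * dist (br a b) b :=
              mul_le_mul_of_nonneg_right (le_max_right C L) dist_nonneg
          _ ≤ max C L * (Q * ε₁) :=
              mul_le_mul_of_nonneg_left (hlip.2.trans hQab) hmax0
          _ = max C L * Q * ε₁ := by ring
          _ < δ := hε₁
      | succ m =>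
        have hrw : ∀ w : M, (f ^ (-((m + 1 : ℕ) : ℤ))) (f w) = (f ^ (-(m : ℤ))) w := by
          intro w
          have : (-((m + 1 : ℕ) : ℤ)) = -(m : ℤ) + (-1) := by push_cast; ring
          rw [this, zpow_add, zpow_neg_one, Equiv.Perm.mul_apply, Equiv.Perm.inv_def, Equiv.symm_apply_apply]
        rw [hrw, hrw]
        have h1 := hcontr_u b (br a b) hmem.2 m
        rw [dist_comm ((f ^ (-(m:ℤ))) b)] at h1
        calc dist ((f ^ (-(m:ℤ))) (br a b)) ((f ^ (-(m:ℤ))) b)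
            ≤ C * lam ^ m * dist b (br a b) := h1
          _ ≤ C * 1 * (Q * ε₁) := by
              apply mul_le_mul
              · apply mul_le_mul_of_nonneg_left _ (le_trans zero_le_one hC)
                exact pow_le_one₀ hlam0.le hlam1.le
              · rw [dist_comm]; exact hlip.2.trans hQab
              · exact dist_nonneg
              · positivity
          _ = C * Q * ε₁ := by ring
          _ < δ := hCQε
  -- induction on n
  induction n with
  | zero => simp
  | succ m ih =>
    have hrw : ∀ w : M, (f ^ ((m + 1 : ℕ) : ℤ)) w = f ((f ^ (m : ℤ)) w) := by
      intro w
      have : ((m + 1 : ℕ) : ℤ) = 1 + (m : ℤ) := by push_cast; ring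
      rw [this, zpow_add, Equiv.Perm.mul_apply, zpow_one]
    have h1 : dist ((f ^ (m : ℤ)) x) ((f ^ (m : ℤ)) y) ≤ ε₁ :=
      hclose m (Nat.le_succ m)
    have h2 : dist (f ((f ^ (m : ℤ)) x)) (f ((f ^ (m : ℤ)) y)) ≤ ε₁ := by
      rw [← hrw, ← hrw]; exact hclose (m + 1) le_rfl
    rw [hrw, hrw, hrw, ih (fun k hk => hclose k (hk.trans (Nat.le_succ m)))]
    exact step _ _ h1 h2
end
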